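/- Positivity of the admissible coupling constant κ₀: Let c_E ≥ 1, c_G > 0, β > 0, δ > 0, K₂ > 0, and let d ≥ 1 be an integer. With G(a,t) := Σ_{n=1}^∞ [ 2 c_E (3√2 √d c_G (1 ∨ √t) Γ(1/2) √t)ⁿ aⁿ ] / ( n Γ(n/2) ) + c_E exp{ − (2β/δ − (K₂δ/(2β)) a ) t } for a ≥ 0, t ≥ 0, there exists a > 0 such that inf_{t ≥ 0} G(a,t) < 1; consequently κ₀ := sup{ a > 0 : inf_{t≥0} G(a,t) < 1 } is strictly positive. -/

import Mathlib

/-!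
Fix the time `T = (δ/β) log (4 c_E)`. For `a ≤ 2β²/(K₂δ²)` the decay rate in the exponential
term is at least `β/δ`, so that term is at most `1/4` at time `T`. Since `n Γ(n/2) ≥ 1`, the series
is dominated by a geometric series in `x = contractionCoeff c_G d T * a`, which is at most `1/2`
once `x` is small.
Hence `G(a, T) < 1` for some small `a > 0`. Conversely, for `a ≥ 4β²/(K₂δ²)` the decay rate is
nonpositive and `G(a, t) ≥ c_E ≥ 1` for all `t ≥ 0`, so the admissible set is bounded above and its
supremum is at least `a`.
-/

open MeasureTheory Real

/-- The contraction factor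
`G(a,t) = ∑_{n≥1} 2 c_E (3√2 √d c_G (1 ∨ √t) Γ(1/2) √t)ⁿ aⁿ / (n Γ(n/2))
          + c_E e^{−(2β/δ − (K₂δ/(2β)) a) t}`. -/
noncomputable def contractionG (c_E c_G β δ K₂ : ℝ) (d : ℕ) (a t : ℝ) : ℝ :=
  (∑' n : ℕ,
      2 * c_E * (3 * Real.sqrt 2 * Real.sqrt d * c_G * (max 1 (Real.sqrt t)) *
            Real.Gamma (1 / 2) * Real.sqrt t) ^ (n + 1) * a ^ (n + 1) /
        (((n : ℝ) + 1) * Real.Gamma (((n : ℝ) + 1) / 2))) +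
    c_E * Real.exp (-(2 * β / δ - (K₂ * δ / (2 * β)) * a) * t)

theorem one_le_succ_mul_Gamma_succ_div_two (n : ℕ) :
    1 ≤ ((n : ℝ) + 1) * Gamma (((n : ℝ) + 1) / 2) := by
  induction n using Nat.twoStepInduction with
  | zero =>
    rw [Nat.cast_zero, zero_add, one_mul, Gamma_one_half_eq, one_le_sqrt]
    exact one_le_two.trans two_le_pi
  | one => norm_num
  | more n ih _ =>
    have hstep : ((n + 2 : ℕ) + 1 : ℝ) * Gamma (((n + 2 : ℕ) + 1 : ℝ) / 2) =
        ((n : ℝ) + 3) / 2 * (((n : ℝ) + 1) * Gamma (((n : ℝ) + 1) / 2)) := by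
      rw [show (((n + 2 : ℕ) : ℝ) + 1) / 2 = ((n : ℝ) + 1) / 2 + 1 by push_cast; ring,
        Gamma_add_one (by positivity)]
      push_cast; ring
    rw [hstep]
    nlinarith

theorem tsum_pow_div_Gamma_le {c x : ℝ} (hc : 0 ≤ c) (hx₀ : 0 ≤ x) (hx₁ : x < 1) :
    ∑' n : ℕ, c * x ^ (n + 1) / (((n : ℝ) + 1) * Gamma (((n : ℝ) + 1) / 2)) ≤
      c * x / (1 - x) := by
  have hle (n : ℕ) : c * x ^ (n + 1) / (((n : ℝ) + 1) * Gamma (((n : ℝ) + 1) / 2)) ≤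
      c * x * x ^ n := by
    rw [div_le_iff₀ (by positivity)]
    have := one_le_succ_mul_Gamma_succ_div_two n
    rw [pow_succ]
    nlinarith [show 0 ≤ c * x ^ n * x by positivity]
  have hgeom := (summable_geometric_of_lt_one hx₀ hx₁).mul_left (c * x)
  calc _ ≤ ∑' n : ℕ, c * x * x ^ n :=
        (hgeom.of_nonneg_of_le (fun n => by positivity) hle).tsum_le_tsum hle hgeom
    _ = c * x / (1 - x) := by
        rw [tsum_mul_left, tsum_geometric_of_lt_one hx₀ hx₁, div_eq_mul_inv]

-- `0 < c` covers the junk value `sInf s = 0` of a set that is not bounded below.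
theorem Real.sInf_lt_of_mem_of_lt {s : Set ℝ} {x c : ℝ} (hx : x ∈ s) (hxc : x < c)
    (hc : 0 < c) : sInf s < c := by
  by_cases hs : BddBelow s
  · exact (csInf_le hs hx).trans_lt hxc
  · rwa [Real.sInf_of_not_bddBelow hs]

noncomputable def contractionCoeff (c_G : ℝ) (d : ℕ) (t : ℝ) : ℝ :=
  3 * √2 * √d * c_G * max 1 √t * Gamma (1 / 2) * √t

noncomputable def decayRate (β δ K₂ a : ℝ) : ℝ :=
  2 * β / δ - (K₂ * δ / (2 * β)) * a

theorem contractionCoeff_nonneg {c_G : ℝ} (hc_G : 0 ≤ c_G) (d : ℕ) (t : ℝ) :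
    0 ≤ contractionCoeff c_G d t := by
  unfold contractionCoeff
  have : 0 ≤ max 1 √t := zero_le_one.trans (le_max_left _ _)
  positivity

theorem contractionG_eq (c_E c_G β δ K₂ : ℝ) (d : ℕ) (a t : ℝ) :
    contractionG c_E c_G β δ K₂ d a t =
      ∑' n : ℕ, 2 * c_E * (contractionCoeff c_G d t * a) ^ (n + 1) /
          (((n : ℝ) + 1) * Gamma (((n : ℝ) + 1) / 2)) +
        c_E * exp (-decayRate β δ K₂ a * t) := by
  simp only [contractionG, contractionCoeff, decayRate, mul_pow, mul_assoc]

theorem decayRate_eq {β δ K₂ : ℝ} (hβ : 0 < β) (hδ : 0 < δ) (hK₂ : 0 < K₂) (a : ℝ) :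
    decayRate β δ K₂ a = K₂ * δ / (2 * β) * (4 * β ^ 2 / (K₂ * δ ^ 2) - a) := by
  unfold decayRate
  field_simp
  ring

theorem one_le_contractionG {c_E c_G β δ K₂ b t : ℝ} (d : ℕ) (hc_E : 1 ≤ c_E) (hc_G : 0 ≤ c_G)
    (hβ : 0 < β) (hδ : 0 < δ) (hK₂ : 0 < K₂) (hb : 4 * β ^ 2 / (K₂ * δ ^ 2) ≤ b) (ht : 0 ≤ t) :
    1 ≤ contractionG c_E c_G β δ K₂ d b t := by
  have hb₀ : 0 ≤ b := hb.trans' (by positivity)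
  have hC := contractionCoeff_nonneg hc_G d t
  have hseries : 0 ≤ ∑' n : ℕ, 2 * c_E * (contractionCoeff c_G d t * b) ^ (n + 1) /
      (((n : ℝ) + 1) * Gamma (((n : ℝ) + 1) / 2)) :=
    tsum_nonneg fun n => by positivity
  have hexp : 1 ≤ exp (-decayRate β δ K₂ b * t) := by
    rw [decayRate_eq hβ hδ hK₂, one_le_exp_iff]
    have : K₂ * δ / (2 * β) * (4 * β ^ 2 / (K₂ * δ ^ 2) - b) ≤ 0 :=
      mul_nonpos_of_nonneg_of_nonpos (by positivity) (by linarith)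
    nlinarith
  rw [contractionG_eq]
  nlinarith

theorem exists_contractionG_lt_one {c_E c_G β δ K₂ : ℝ} (d : ℕ) (hc_E : 1 ≤ c_E)
    (hc_G : 0 ≤ c_G) (hβ : 0 < β) (hδ : 0 < δ) (hK₂ : 0 < K₂) :
    ∃ a > 0, ∃ t ≥ 0, contractionG c_E c_G β δ K₂ d a t < 1 := by
  set T := δ / β * log (4 * c_E)
  have hT : 0 ≤ T := by have := log_nonneg (show 1 ≤ 4 * c_E by linarith); positivity
  set C := contractionCoeff c_G d T
  have hC : 0 ≤ C := contractionCoeff_nonneg hc_G d T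
  set a := min (1 / (8 * c_E * (C + 1))) (2 * β ^ 2 / (K₂ * δ ^ 2))
  have ha : 0 < a := lt_min (by positivity) (by positivity)
  have hx : C * a ≤ 1 / (8 * c_E) := calc
    C * a ≤ (C + 1) * (1 / (8 * c_E * (C + 1))) := by
      gcongr
      · linarith
      · exact min_le_left _ _
    _ = 1 / (8 * c_E) := by field_simp
  have hx₁ : C * a ≤ 1 / 8 := hx.trans (by gcongr; linarith)
  have hseries : ∑' n : ℕ, 2 * c_E * (C * a) ^ (n + 1) /
      (((n : ℝ) + 1) * Gamma (((n : ℝ) + 1) / 2)) ≤ 1 / 2 := by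
    refine (tsum_pow_div_Gamma_le (by positivity) (by positivity) (by linarith)).trans ?_
    rw [div_le_iff₀ (by linarith)]
    have : 8 * c_E * (C * a) ≤ 1 := by rwa [le_div_iff₀' (by positivity)] at hx
    nlinarith
  have hexp : c_E * exp (-decayRate β δ K₂ a * T) ≤ 1 / 4 := by
    have hrate : β / δ ≤ decayRate β δ K₂ a := by
      calc β / δ = K₂ * δ / (2 * β) * (4 * β ^ 2 / (K₂ * δ ^ 2) - 2 * β ^ 2 / (K₂ * δ ^ 2)) := by
            field_simp; ring
        _ ≤ _ := by rw [decayRate_eq hβ hδ hK₂]; gcongr; exact min_le_right _ _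
    calc c_E * exp (-decayRate β δ K₂ a * T)
        ≤ c_E * exp (-(β / δ) * T) := by gcongr
      _ = 1 / 4 := by
        rw [show -(β / δ) * T = -log (4 * c_E) by simp only [T]; field_simp, exp_neg,
          exp_log (by linarith)]
        field_simp
  refine ⟨a, ha, T, hT, ?_⟩
  rw [contractionG_eq]
  linarith

theorem kappa0_positive_general
    (c_E c_G β δ K₂ : ℝ) (d : ℕ)
    (hcE : 1 ≤ c_E) (hcG : 0 < c_G) (hβ : 0 < β) (hδ : 0 < δ) (hK₂ : 0 < K₂) :
    (∃ a > (0:ℝ),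
      sInf ((fun t => contractionG c_E c_G β δ K₂ d a t) '' Set.Ici 0) < 1) ∧
    0 < sSup {a : ℝ | 0 < a ∧
      sInf ((fun t => contractionG c_E c_G β δ K₂ d a t) '' Set.Ici 0) < 1} := by
  obtain ⟨a, ha, T, hT, hGT⟩ := exists_contractionG_lt_one d hcE hcG.le hβ hδ hK₂
  have hinf : sInf ((fun t => contractionG c_E c_G β δ K₂ d a t) '' Set.Ici 0) < 1 :=
    Real.sInf_lt_of_mem_of_lt ⟨T, hT, rfl⟩ hGT one_pos
  have hbdd : BddAbove {a : ℝ | 0 < a ∧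
      sInf ((fun t => contractionG c_E c_G β δ K₂ d a t) '' Set.Ici 0) < 1} := by
    refine ⟨4 * β ^ 2 / (K₂ * δ ^ 2), fun b ⟨_, hb⟩ => le_of_not_gt fun hlt => hb.not_ge ?_⟩
    exact le_csInf ⟨_, 0, Set.self_mem_Ici, rfl⟩ fun _ ⟨t, ht, hGt⟩ =>
      hGt ▸ one_le_contractionG d hcE hcG.le hβ hδ hK₂ hlt.le ht
  exact ⟨⟨a, ha, hinf⟩, ha.trans_le (le_csSup hbdd ⟨ha, hinf⟩)⟩

/-- Positivity of the admissible coupling constant `κ₀`: there exists `a > 0`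
with `inf_{t ≥ 0} G(a,t) < 1`; consequently
`κ₀ = sup{ a > 0 : inf_{t ≥ 0} G(a,t) < 1 }` is strictly positive. -/
theorem kappa0_positive
    (c_E c_G β δ K₂ : ℝ) (d : ℕ)
    (hcE : 1 ≤ c_E) (hcG : 0 < c_G) (hβ : 0 < β) (hδ : 0 < δ) (hK₂ : 0 < K₂)
    (hd : 1 ≤ d) :
    (∃ a > (0:ℝ),
      sInf ((fun t => contractionG c_E c_G β δ K₂ d a t) '' Set.Ici 0) < 1) ∧
    0 < sSup {a : ℝ | 0 < a ∧
      sInf ((fun t => contractionG c_E c_G β δ K₂ d a t) '' Set.Ici 0) < 1} :=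
  kappa0_positive_general c_E c_G β δ K₂ d hcE hcG hβ hδ hK₂
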